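/- arXiv:2601.14911 — 4 statements merged into one kernel-verified Lean document; each statement's English description precedes it below -/
import Mathlib

section
/- Let N ≥ 1, let A be a symmetric positive definite real N×N matrix, let b ∈ ℝ^N and x⋆ := A⁻¹b. Let q ∈ (0,1) and let B : ℝ^N → ℝ^N be a (possibly nonlinear) map satisfying |y − B(A y)|_A ≤ q |y|_A for all y ∈ ℝ^N. Given an initial guess x⁰ ∈ ℝ^N, define the generalized preconditioned conjugate gradient (GPCG) sequences by r⁰ := b − A x⁰, p⁰ := B(r⁰), and for k ≥ 0: α_k := (B(r^k) · r^k) / ((p^k)ᵀ A p^k), x^{k+1} := x^k + α_k p^k, r^{k+1} := r^k − α_k A p^k, β_k := (B(r^{k+1}) · r^{k+1} − B(r^{k+1}) · r^k) / (B(r^k) · r^k), p^{k+1} := B(r^{k+1}) + β_k p^k. Then for every k ∈ ℕ such that r^j ≠ 0 and p^j ≠ 0 for all 0 ≤ j ≤ k, one has |x⋆ − x^{k+1}|_A ≤ q |x⋆ − x^k|_A. -/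
/-!
Write `e_k := x⋆ - x^k`, so that `r^k = A e_k`. The recurrences make the new residual
`r^{k+1}` orthogonal to `p^k` and, through the `A`-conjugacy of `p^k` and `p^{k-1}`, also to
`B(r^k)`. Hence `e_k - B(A e_k) = e_{k+1} + (α_k p^k - B(r^k))` is an `A`-orthogonal
decomposition, and `|e_{k+1}|_A ≤ |e_k - B(A e_k)|_A ≤ q |e_k|_A`.
-/

open Matrix

/-- The `A`-norm `|x|_A := √(xᵀ A x)` induced by a matrix `A`. -/
noncomputable def anorm {N : ℕ} (A : Matrix (Fin N) (Fin N) ℝ) (x : Fin N → ℝ) : ℝ :=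
  Real.sqrt (x ⬝ᵥ A.mulVec x)

namespace Matrix

variable {n : Type*} [Fintype n] {A : Matrix n n ℝ}

theorem IsSymm.dotProduct_mulVec_comm (hA : A.IsSymm) (x y : n → ℝ) :
    x ⬝ᵥ A *ᵥ y = y ⬝ᵥ A *ᵥ x := by
  simpa only [hA.eq] using dotProduct_transpose_mulVec A x y

theorem IsSymm.add_dotProduct_mulVec_add (hA : A.IsSymm) (u w : n → ℝ) :
    (u + w) ⬝ᵥ A *ᵥ (u + w) = u ⬝ᵥ A *ᵥ u + 2 * (u ⬝ᵥ A *ᵥ w) + w ⬝ᵥ A *ᵥ w := by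
  rw [mulVec_add, add_dotProduct, dotProduct_add, dotProduct_add, hA.dotProduct_mulVec_comm w u]
  ring

theorem IsSymm.sub_dotProduct_mulVec_sub (hA : A.IsSymm) (u w : n → ℝ) :
    (u - w) ⬝ᵥ A *ᵥ (u - w) = u ⬝ᵥ A *ᵥ u - 2 * (w ⬝ᵥ A *ᵥ u) + w ⬝ᵥ A *ᵥ w := by
  rw [mulVec_sub, sub_dotProduct, dotProduct_sub, dotProduct_sub, hA.dotProduct_mulVec_comm u w]
  ring

end Matrix

section ANorm

variable {N : ℕ} {A : Matrix (Fin N) (Fin N) ℝ}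

theorem anorm_sq (hA : A.PosSemidef) (v : Fin N → ℝ) : anorm A v ^ 2 = v ⬝ᵥ A *ᵥ v :=
  Real.sq_sqrt (by simpa using hA.dotProduct_mulVec_nonneg v)

theorem anorm_pos (hA : A.PosDef) {v : Fin N → ℝ} (hv : v ≠ 0) : 0 < anorm A v :=
  Real.sqrt_pos.2 (by simpa using hA.dotProduct_mulVec_pos hv)

theorem anorm_le_anorm_add_of_dotProduct_mulVec_eq_zero (hA : A.PosSemidef) {u w : Fin N → ℝ}
    (h : u ⬝ᵥ A *ᵥ w = 0) : anorm A u ≤ anorm A (u + w) := by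
  have hw : 0 ≤ w ⬝ᵥ A *ᵥ w := by simpa using hA.dotProduct_mulVec_nonneg w
  apply Real.sqrt_le_sqrt
  rw [(isHermitian_iff_isSymm.mp hA.isHermitian).add_dotProduct_mulVec_add, h]
  linarith

theorem dotProduct_mulVec_pos_of_anorm_sub_lt (hA : A.PosSemidef) {y z : Fin N → ℝ}
    (h : anorm A (y - z) < anorm A y) : 0 < z ⬝ᵥ A *ᵥ y := by
  have hsq := pow_lt_pow_left₀ h (Real.sqrt_nonneg _) two_ne_zero
  have hz : 0 ≤ z ⬝ᵥ A *ᵥ z := by simpa using hA.dotProduct_mulVec_nonneg z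
  rw [anorm_sq hA, anorm_sq hA,
    (isHermitian_iff_isSymm.mp hA.isHermitian).sub_dotProduct_mulVec_sub] at hsq
  linarith

end ANorm

structure IsGPCG {n : Type*} [Fintype n] (A : Matrix n n ℝ) (B : (n → ℝ) → n → ℝ) (b : n → ℝ)
    (x r p : ℕ → n → ℝ) (α β : ℕ → ℝ) : Prop where
  residual_zero : r 0 = b - A *ᵥ x 0
  direction_zero : p 0 = B (r 0)
  alpha_eq : ∀ k, α k = (B (r k) ⬝ᵥ r k) / (p k ⬝ᵥ A *ᵥ p k)
  iterate_succ : ∀ k, x (k + 1) = x k + α k • p k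
  residual_succ : ∀ k, r (k + 1) = r k - α k • (A *ᵥ p k)
  beta_eq : ∀ k, β k = (B (r (k + 1)) ⬝ᵥ r (k + 1) - B (r (k + 1)) ⬝ᵥ r k) / (B (r k) ⬝ᵥ r k)
  direction_succ : ∀ k, p (k + 1) = B (r (k + 1)) + β k • p k

namespace IsGPCG

variable {n : Type*} [Fintype n] {A : Matrix n n ℝ} {B : (n → ℝ) → n → ℝ} {b : n → ℝ}
  {x r p : ℕ → n → ℝ} {α β : ℕ → ℝ}

theorem residual_eq_mulVec_sub (h : IsGPCG A B b x r p α β) {xstar : n → ℝ}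
    (hxstar : A *ᵥ xstar = b) (j : ℕ) : r j = A *ᵥ (xstar - x j) := by
  induction j with
  | zero => rw [h.residual_zero, ← hxstar, mulVec_sub]
  | succ j ih =>
    rw [h.residual_succ, ih, h.iterate_succ, ← mulVec_smul, ← mulVec_sub, sub_add_eq_sub_sub]

theorem alpha_mul_dotProduct_mulVec (h : IsGPCG A B b x r p α β) (hA : A.PosDef) {j : ℕ}
    (hp : p j ≠ 0) : α j * (p j ⬝ᵥ A *ᵥ p j) = B (r j) ⬝ᵥ r j := by
  rw [h.alpha_eq, div_mul_cancel₀ _ (by simpa using (hA.dotProduct_mulVec_pos hp).ne')]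

theorem residual_succ_dotProduct_direction_of_eq (h : IsGPCG A B b x r p α β) (hA : A.PosDef)
    {j : ℕ} (hp : p j ≠ 0) (hrp : r j ⬝ᵥ p j = B (r j) ⬝ᵥ r j) : r (j + 1) ⬝ᵥ p j = 0 := by
  rw [h.residual_succ, sub_dotProduct, smul_dotProduct, smul_eq_mul, dotProduct_comm (A *ᵥ p j),
    h.alpha_mul_dotProduct_mulVec hA hp, hrp, sub_self]

theorem residual_dotProduct_direction (h : IsGPCG A B b x r p α β) (hA : A.PosDef) {j : ℕ}
    (hp : ∀ i < j, p i ≠ 0) : r j ⬝ᵥ p j = B (r j) ⬝ᵥ r j := by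
  induction j with
  | zero => rw [h.direction_zero, dotProduct_comm]
  | succ j ih =>
    have hrp := h.residual_succ_dotProduct_direction_of_eq hA (hp j j.lt_succ_self)
      (ih fun i hi => hp i (hi.trans j.lt_succ_self))
    rw [h.direction_succ, dotProduct_add, dotProduct_smul, hrp, smul_zero, add_zero,
      dotProduct_comm]

theorem residual_succ_dotProduct_direction (h : IsGPCG A B b x r p α β) (hA : A.PosDef) {j : ℕ}
    (hp : ∀ i ≤ j, p i ≠ 0) : r (j + 1) ⬝ᵥ p j = 0 :=
  h.residual_succ_dotProduct_direction_of_eq hA (hp j le_rfl)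
    (h.residual_dotProduct_direction hA fun i hi => hp i hi.le)

theorem direction_succ_dotProduct_mulVec_direction (h : IsGPCG A B b x r p α β) (hA : A.PosDef)
    {j : ℕ} (hp : p j ≠ 0) (hBr : B (r j) ⬝ᵥ r j ≠ 0) : p (j + 1) ⬝ᵥ A *ᵥ p j = 0 := by
  have hα := h.alpha_mul_dotProduct_mulVec hA hp
  have hα0 : α j ≠ 0 := left_ne_zero_of_mul (hα ▸ hBr)
  have hD : p j ⬝ᵥ A *ᵥ p j ≠ 0 := right_ne_zero_of_mul (hα ▸ hBr)
  have hβ : β j * (p j ⬝ᵥ A *ᵥ p j) = -(B (r (j + 1)) ⬝ᵥ A *ᵥ p j) := by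
    rw [h.beta_eq, ← dotProduct_sub, h.residual_succ, sub_sub_cancel_left, dotProduct_neg,
      dotProduct_smul, smul_eq_mul, ← hα]
    field_simp
  rw [h.direction_succ, add_dotProduct, smul_dotProduct, smul_eq_mul, hβ, add_neg_cancel]

theorem residual_succ_succ_dotProduct_direction (h : IsGPCG A B b x r p α β) (hA : A.IsSymm)
    {j : ℕ} (hconj : p (j + 1) ⬝ᵥ A *ᵥ p j = 0) (hrp : r (j + 1) ⬝ᵥ p j = 0) :
    r (j + 1 + 1) ⬝ᵥ p j = 0 := by
  rw [h.residual_succ, sub_dotProduct, smul_dotProduct, dotProduct_comm (A *ᵥ _),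
    hA.dotProduct_mulVec_comm, hconj, hrp, smul_zero, sub_zero]

theorem residual_succ_dotProduct_precond (h : IsGPCG A B b x r p α β) (hA : A.PosDef) {k : ℕ}
    (hp : ∀ i ≤ k, p i ≠ 0) (hBr : ∀ i < k, B (r i) ⬝ᵥ r i ≠ 0) : r (k + 1) ⬝ᵥ B (r k) = 0 := by
  have hrp := h.residual_succ_dotProduct_direction hA hp
  cases k with
  | zero => rwa [← h.direction_zero]
  | succ m =>
    have hconj := h.direction_succ_dotProduct_mulVec_direction hA (hp m m.le_succ)
      (hBr m m.lt_succ_self)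
    have hrp' := h.residual_succ_succ_dotProduct_direction
      (isHermitian_iff_isSymm.mp hA.isHermitian) hconj
      (h.residual_succ_dotProduct_direction hA fun i hi => hp i (hi.trans m.le_succ))
    rw [eq_sub_of_add_eq (h.direction_succ m).symm, dotProduct_sub, dotProduct_smul, hrp, hrp',
      smul_zero, sub_zero]

theorem anorm_error_succ_le {N : ℕ} {A : Matrix (Fin N) (Fin N) ℝ}
    {B : (Fin N → ℝ) → Fin N → ℝ} {b : Fin N → ℝ} {x r p : ℕ → Fin N → ℝ}
    (h : IsGPCG A B b x r p α β) (hA : A.PosDef) {xstar : Fin N → ℝ} (hxstar : A *ᵥ xstar = b)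
    {k : ℕ} (hp : ∀ i ≤ k, p i ≠ 0) (hBr : ∀ i < k, B (r i) ⬝ᵥ r i ≠ 0) :
    anorm A (xstar - x (k + 1)) ≤ anorm A (xstar - x k - B (r k)) := by
  have horth : (xstar - x (k + 1)) ⬝ᵥ A *ᵥ (α k • p k - B (r k)) = 0 := by
    rw [(isHermitian_iff_isSymm.mp hA.isHermitian).dotProduct_mulVec_comm,
      ← h.residual_eq_mulVec_sub hxstar, dotProduct_comm, dotProduct_sub, dotProduct_smul,
      h.residual_succ_dotProduct_direction hA hp, h.residual_succ_dotProduct_precond hA hp hBr,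
      smul_zero, sub_zero]
  have hsplit : xstar - x k - B (r k) = xstar - x (k + 1) + (α k • p k - B (r k)) := by
    rw [h.iterate_succ]
    abel
  rw [hsplit]
  exact anorm_le_anorm_add_of_dotProduct_mulVec_eq_zero hA.posSemidef horth

end IsGPCG

theorem gpcg_contraction_general {N : ℕ}
    (A : Matrix (Fin N) (Fin N) ℝ) (hA : A.PosDef)
    (b xstar : Fin N → ℝ) (hxstar : A.mulVec xstar = b)
    (q : ℝ) (hq1 : q < 1)
    (B : (Fin N → ℝ) → (Fin N → ℝ))
    (hB : ∀ y : Fin N → ℝ, anorm A (y - B (A.mulVec y)) ≤ q * anorm A y)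
    (x r p : ℕ → Fin N → ℝ) (α β : ℕ → ℝ)
    (hr0 : r 0 = b - A.mulVec (x 0))
    (hp0 : p 0 = B (r 0))
    (hα : ∀ k, α k = (B (r k) ⬝ᵥ r k) / (p k ⬝ᵥ A.mulVec (p k)))
    (hxs : ∀ k, x (k + 1) = x k + α k • p k)
    (hrs : ∀ k, r (k + 1) = r k - α k • A.mulVec (p k))
    (hβ : ∀ k, β k = (B (r (k + 1)) ⬝ᵥ r (k + 1) - B (r (k + 1)) ⬝ᵥ r k) /
      (B (r k) ⬝ᵥ r k))
    (hps : ∀ k, p (k + 1) = B (r (k + 1)) + β k • p k)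
    (k : ℕ) (hnz : ∀ j ≤ k, r j ≠ 0 ∧ p j ≠ 0) :
    anorm A (xstar - x (k + 1)) ≤ q * anorm A (xstar - x k) := by
  have h : IsGPCG A B b x r p α β := ⟨hr0, hp0, hα, hxs, hrs, hβ, hps⟩
  have hre := h.residual_eq_mulVec_sub hxstar
  -- `q < 1` is what makes `B (r i) ⬝ᵥ r i` positive, so that `β` is not a division by zero.
  have hBr : ∀ i < k, B (r i) ⬝ᵥ r i ≠ 0 := by
    intro i hi
    have he : xstar - x i ≠ 0 := fun he => (hnz i hi.le).1 (by rw [hre, he, mulVec_zero])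
    have hpos := dotProduct_mulVec_pos_of_anorm_sub_lt hA.posSemidef
      ((hB _).trans_lt (mul_lt_of_lt_one_left (anorm_pos hA he) hq1))
    rw [← hre] at hpos
    exact hpos.ne'
  calc anorm A (xstar - x (k + 1)) ≤ anorm A (xstar - x k - B (r k)) :=
        h.anorm_error_succ_le hA hxstar (fun i hi => (hnz i hi).2) hBr
    _ ≤ q * anorm A (xstar - x k) := by
        rw [hre k]
        exact hB _

/-- Contraction of the generalized preconditioned conjugate gradient (GPCG) method:
if the (possibly nonlinear) preconditioner `B` satisfies
`|y − B(A y)|_A ≤ q |y|_A` for all `y` with `q ∈ (0,1)`, then the GPCG iterates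
contract with factor `q` in the `A`-norm, as long as the residuals and search
directions do not vanish. -/
theorem gpcg_contraction {N : ℕ} (hN : 1 ≤ N)
    (A : Matrix (Fin N) (Fin N) ℝ) (hA : A.PosDef)
    (b xstar : Fin N → ℝ) (hxstar : A.mulVec xstar = b)
    (q : ℝ) (hq0 : 0 < q) (hq1 : q < 1)
    (B : (Fin N → ℝ) → (Fin N → ℝ))
    (hB : ∀ y : Fin N → ℝ, anorm A (y - B (A.mulVec y)) ≤ q * anorm A y)
    (x r p : ℕ → Fin N → ℝ) (α β : ℕ → ℝ)
    (hr0 : r 0 = b - A.mulVec (x 0))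
    (hp0 : p 0 = B (r 0))
    (hα : ∀ k, α k = (B (r k) ⬝ᵥ r k) / (p k ⬝ᵥ A.mulVec (p k)))
    (hxs : ∀ k, x (k + 1) = x k + α k • p k)
    (hrs : ∀ k, r (k + 1) = r k - α k • A.mulVec (p k))
    (hβ : ∀ k, β k = (B (r (k + 1)) ⬝ᵥ r (k + 1) - B (r (k + 1)) ⬝ᵥ r k) /
      (B (r k) ⬝ᵥ r k))
    (hps : ∀ k, p (k + 1) = B (r (k + 1)) + β k • p k)
    (k : ℕ) (hnz : ∀ j ≤ k, r j ≠ 0 ∧ p j ≠ 0) :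
    anorm A (xstar - x (k + 1)) ≤ q * anorm A (xstar - x k) :=
  gpcg_contraction_general A hA b xstar hxstar q hq1 B hB x r p α β hr0 hp0 hα hxs hrs hβ hps k hnz
end

section
/- Let A be a symmetric positive definite real N×N matrix, let q ∈ [0,1), and let E be a real N×N matrix with |E x|_A ≤ q |x|_A for all x ∈ ℝ^N. Define P := I − E E^{T_A}, where E^{T_A} := A⁻¹ Eᵀ A. Then: (i) P is self-adjoint with respect to the A-inner product, i.e., Pᵀ A = A P; (ii) (P x, x)_A ≥ (1 − q²) |x|_A² for all x ∈ ℝ^N, so in particular P is positive definite; (iii) |P x|_A ≤ (1 + q²) |x|_A for all x ∈ ℝ^N; (iv) P is invertible and |P⁻¹ x|_A ≤ (1 − q²)⁻¹ |x|_A for all x ∈ ℝ^N; consequently the condition number of P with respect to the norm |·|_A is at most (1 + q²)/(1 − q²); and (v) the matrix B := P A⁻¹ = A⁻¹ − E A⁻¹ Eᵀ is symmetric positive definite. -/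
open Matrix

/-! The `A`-adjoint `S = A⁻¹ Eᵀ A` satisfies `(E y, x)_A = (y, S x)_A`, so
`|S x|_A² = (E S x, x)_A ≤ q |S x|_A |x|_A` and `S` is a `q`-contraction as well. Hence
`(P x, x)_A = |x|_A² - |S x|_A² ≥ (1 - q²) |x|_A²` and
`|P x|_A ≤ |x|_A + |E S x|_A ≤ (1 + q²) |x|_A`. By Cauchy–Schwarz the coercivity gives
`(1 - q²) |x|_A ≤ |P x|_A`, hence invertibility of `P` and the bound on `P⁻¹`. Finally
`B = P A⁻¹` is symmetric because `P` is `A`-self-adjoint, and `xᵀ B x = (P y, y)_A` with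
`y = A⁻¹ x`. -/

namespace Matrix

variable {n : Type*} [Fintype n] {A : Matrix n n ℝ}

lemma PosDef.mulVec_dotProduct_mulVec_pos_of_coercive (hA : A.PosDef) {P : Matrix n n ℝ}
    {c : ℝ} (hc : 0 < c) (hP : ∀ x, c * (x ⬝ᵥ (A *ᵥ x)) ≤ (P *ᵥ x) ⬝ᵥ (A *ᵥ x)) :
    ∀ x ≠ 0, 0 < (P *ᵥ x) ⬝ᵥ (A *ᵥ x) := fun x hx =>
  (mul_pos hc (by simpa using hA.dotProduct_mulVec_pos hx)).trans_le (hP x)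

variable [DecidableEq n]

lemma mulVec_dotProduct_mulVec_eq_adjoint (hA : IsUnit A.det) (M : Matrix n n ℝ) (x y : n → ℝ) :
    (M *ᵥ x) ⬝ᵥ (A *ᵥ y) = x ⬝ᵥ (A *ᵥ ((A⁻¹ * Mᵀ * A) *ᵥ y)) := by
  rw [mulVec_mulVec, ← Matrix.mul_assoc, ← Matrix.mul_assoc, mul_nonsing_inv A hA, Matrix.one_mul,
    dotProduct_mulVec, dotProduct_mulVec, ← vecMul_vecMul, vecMul_transpose]

lemma one_sub_mul_adjoint_mulVec_dotProduct (hA : IsUnit A.det) (M : Matrix n n ℝ) (x : n → ℝ) :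
    ((1 - M * (A⁻¹ * Mᵀ * A)) *ᵥ x) ⬝ᵥ (A *ᵥ x) =
      x ⬝ᵥ (A *ᵥ x) - ((A⁻¹ * Mᵀ * A) *ᵥ x) ⬝ᵥ (A *ᵥ ((A⁻¹ * Mᵀ * A) *ᵥ x)) := by
  rw [sub_mulVec, one_mulVec, ← mulVec_mulVec, sub_dotProduct,
    mulVec_dotProduct_mulVec_eq_adjoint hA]

lemma transpose_one_sub_mul_adjoint_mul (hA : A.IsSymm) (M : Matrix n n ℝ) :
    (1 - M * (A⁻¹ * Mᵀ * A))ᵀ * A = A * (1 - M * (A⁻¹ * Mᵀ * A)) := by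
  simp only [transpose_sub, transpose_one, transpose_mul, transpose_transpose, hA.eq, hA.inv.eq,
    Matrix.sub_mul, Matrix.mul_sub, Matrix.one_mul, Matrix.mul_one, Matrix.mul_assoc]

lemma one_sub_mul_adjoint_mul_inv (hA : IsUnit A.det) (M : Matrix n n ℝ) :
    (1 - M * (A⁻¹ * Mᵀ * A)) * A⁻¹ = A⁻¹ - M * A⁻¹ * Mᵀ := by
  rw [Matrix.sub_mul, Matrix.one_mul, Matrix.mul_assoc, Matrix.mul_assoc, Matrix.mul_assoc,
    mul_nonsing_inv A hA, Matrix.mul_one, Matrix.mul_assoc]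

lemma isUnit_of_mulVec_dotProduct_mulVec_pos {P : Matrix n n ℝ}
    (hP : ∀ x ≠ 0, 0 < (P *ᵥ x) ⬝ᵥ (A *ᵥ x)) : IsUnit P := by
  refine mulVec_injective_iff_isUnit.mp fun x y hxy => ?_
  by_contra hne
  have h := hP (x - y) (sub_ne_zero.mpr hne)
  rw [mulVec_sub, hxy, sub_self, zero_dotProduct] at h
  exact h.false

lemma PosDef.mul_inv_of_transpose_mul_eq (hA : A.PosDef) {P : Matrix n n ℝ}
    (hPA : Pᵀ * A = A * P) (hP : ∀ x ≠ 0, 0 < (P *ᵥ x) ⬝ᵥ (A *ᵥ x)) : (P * A⁻¹).PosDef := by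
  have hdet : IsUnit A.det := isUnit_iff_ne_zero.mpr hA.det_pos.ne'
  have hsymm : A.IsSymm := isHermitian_iff_isSymm.mp hA.isHermitian
  refine .of_dotProduct_mulVec_pos (isHermitian_iff_isSymm.mpr ?_) fun x hx => ?_
  · calc (P * A⁻¹)ᵀ = A⁻¹ * (Pᵀ * A) * A⁻¹ := by
          rw [transpose_mul, hsymm.inv.eq, Matrix.mul_assoc, Matrix.mul_assoc,
            mul_nonsing_inv A hdet, Matrix.mul_one]
      _ = P * A⁻¹ := by rw [hPA, ← Matrix.mul_assoc, nonsing_inv_mul A hdet, Matrix.one_mul]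
  · have hy : A⁻¹ *ᵥ x ≠ 0 := fun h => hx (by
      rw [← one_mulVec x, ← mul_nonsing_inv A hdet, ← mulVec_mulVec, h, mulVec_zero])
    have h := hP _ hy
    rwa [mulVec_mulVec x A, mul_nonsing_inv A hdet, one_mulVec, dotProduct_comm, mulVec_mulVec,
      ← star_trivial x] at h

end Matrix

section ANorm

variable {N : ℕ} {A : Matrix (Fin N) (Fin N) ℝ}

lemma anorm_nonneg (A : Matrix (Fin N) (Fin N) ℝ) (x : Fin N → ℝ) : 0 ≤ anorm A x :=
  Real.sqrt_nonneg _

lemma sq_anorm (hA : A.PosSemidef) (x : Fin N → ℝ) : anorm A x ^ 2 = x ⬝ᵥ (A *ᵥ x) :=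
  Real.sq_sqrt (by simpa using hA.dotProduct_mulVec_nonneg x)

lemma anorm_eq_norm (hA : A.PosSemidef) (x : Fin N → ℝ) :
    anorm A x = @norm _ (A.toSeminormedAddCommGroup hA).toNorm x := by
  let := A.toSeminormedAddCommGroup hA
  let := A.toInnerProductSpace hA
  rw [anorm, norm_eq_sqrt_re_inner (𝕜 := ℝ)]
  congr 1
  exact dotProduct_comm _ _

lemma dotProduct_mulVec_le_anorm_mul_anorm (hA : A.PosSemidef) (x y : Fin N → ℝ) :
    x ⬝ᵥ (A *ᵥ y) ≤ anorm A x * anorm A y := by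
  let := A.toSeminormedAddCommGroup hA
  let := A.toInnerProductSpace hA
  rw [anorm_eq_norm hA, anorm_eq_norm hA]
  exact (dotProduct_comm _ _).trans_le (real_inner_le_norm x y)

lemma anorm_sub_le (hA : A.PosSemidef) (x y : Fin N → ℝ) :
    anorm A (x - y) ≤ anorm A x + anorm A y := by
  simp only [anorm_eq_norm hA]
  exact @norm_sub_le _ (A.toSeminormedAddCommGroup hA).toSeminormedAddGroup x y

lemma le_anorm_mulVec_of_coercive (hA : A.PosSemidef) {P : Matrix (Fin N) (Fin N) ℝ} {c : ℝ}
    (hc : 0 ≤ c) (hP : ∀ x, c * (x ⬝ᵥ (A *ᵥ x)) ≤ (P *ᵥ x) ⬝ᵥ (A *ᵥ x)) (x : Fin N → ℝ) :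
    c * anorm A x ≤ anorm A (P *ᵥ x) := by
  have key : c * anorm A x * anorm A x ≤ anorm A (P *ᵥ x) * anorm A x :=
    calc c * anorm A x * anorm A x = c * (x ⬝ᵥ (A *ᵥ x)) := by rw [← sq_anorm hA]; ring
      _ ≤ (P *ᵥ x) ⬝ᵥ (A *ᵥ x) := hP x
      _ ≤ anorm A (P *ᵥ x) * anorm A x := dotProduct_mulVec_le_anorm_mul_anorm hA _ _
  nlinarith [anorm_nonneg A x, anorm_nonneg A (P *ᵥ x)]

lemma anorm_inv_mulVec_le_of_coercive (hA : A.PosSemidef) {P : Matrix (Fin N) (Fin N) ℝ}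
    (hPU : IsUnit P) {c : ℝ} (hc : 0 < c)
    (hP : ∀ x, c * (x ⬝ᵥ (A *ᵥ x)) ≤ (P *ᵥ x) ⬝ᵥ (A *ᵥ x)) (x : Fin N → ℝ) :
    anorm A (P⁻¹ *ᵥ x) ≤ c⁻¹ * anorm A x := by
  have h := le_anorm_mulVec_of_coercive hA hc.le hP (P⁻¹ *ᵥ x)
  rw [mulVec_mulVec, mul_nonsing_inv P ((isUnit_iff_isUnit_det P).mp hPU), one_mulVec] at h
  rwa [inv_mul_eq_div, le_div_iff₀ hc, mul_comm]

variable {M : Matrix (Fin N) (Fin N) ℝ} {q : ℝ}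

lemma anorm_adjoint_mulVec_le (hA : A.PosDef) (hq : 0 ≤ q)
    (hM : ∀ x, anorm A (M *ᵥ x) ≤ q * anorm A x) (x : Fin N → ℝ) :
    anorm A ((A⁻¹ * Mᵀ * A) *ᵥ x) ≤ q * anorm A x := by
  set u := (A⁻¹ * Mᵀ * A) *ᵥ x
  have hdet : IsUnit A.det := isUnit_iff_ne_zero.mpr hA.det_pos.ne'
  have key : anorm A u ^ 2 ≤ anorm A u * (q * anorm A x) :=
    calc anorm A u ^ 2 = (M *ᵥ u) ⬝ᵥ (A *ᵥ x) := by
          rw [sq_anorm hA.posSemidef, mulVec_dotProduct_mulVec_eq_adjoint hdet M u x]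
      _ ≤ anorm A (M *ᵥ u) * anorm A x := dotProduct_mulVec_le_anorm_mul_anorm hA.posSemidef _ _
      _ ≤ q * anorm A u * anorm A x := by gcongr; exacts [anorm_nonneg A x, hM u]
      _ = anorm A u * (q * anorm A x) := by ring
  nlinarith [anorm_nonneg A u, mul_nonneg hq (anorm_nonneg A x)]

lemma one_sub_mul_adjoint_coercive (hA : A.PosDef) (hq : 0 ≤ q)
    (hM : ∀ x, anorm A (M *ᵥ x) ≤ q * anorm A x) (x : Fin N → ℝ) :
    (1 - q ^ 2) * (x ⬝ᵥ (A *ᵥ x)) ≤ ((1 - M * (A⁻¹ * Mᵀ * A)) *ᵥ x) ⬝ᵥ (A *ᵥ x) := by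
  have hdet : IsUnit A.det := isUnit_iff_ne_zero.mpr hA.det_pos.ne'
  have h := pow_le_pow_left₀ (anorm_nonneg A _) (anorm_adjoint_mulVec_le hA hq hM x) 2
  rw [mul_pow, sq_anorm hA.posSemidef, sq_anorm hA.posSemidef] at h
  rw [one_sub_mul_adjoint_mulVec_dotProduct hdet]
  linarith

lemma anorm_one_sub_mul_adjoint_mulVec_le (hA : A.PosDef) (hq : 0 ≤ q)
    (hM : ∀ x, anorm A (M *ᵥ x) ≤ q * anorm A x) (x : Fin N → ℝ) :
    anorm A ((1 - M * (A⁻¹ * Mᵀ * A)) *ᵥ x) ≤ (1 + q ^ 2) * anorm A x := by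
  rw [sub_mulVec, one_mulVec, ← mulVec_mulVec]
  calc _ ≤ anorm A x + anorm A (M *ᵥ ((A⁻¹ * Mᵀ * A) *ᵥ x)) := anorm_sub_le hA.posSemidef _ _
    _ ≤ anorm A x + q * (q * anorm A x) := by
        gcongr; exact (hM _).trans (by gcongr; exact anorm_adjoint_mulVec_le hA hq hM x)
    _ = (1 + q ^ 2) * anorm A x := by ring

end ANorm

/-- Abstract optimality of the symmetric multigrid preconditioner: if the error
propagation matrix `E` satisfies `|E x|_A ≤ q |x|_A` with `q ∈ [0,1)`, then
`P := I − E E^{T_A}` is `A`-self-adjoint, satisfies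
`(P x, x)_A ≥ (1 − q²) |x|_A²`, `|P x|_A ≤ (1 + q²) |x|_A`, is invertible with
`|P⁻¹ x|_A ≤ (1 − q²)⁻¹ |x|_A` (hence `cond_A(P) ≤ (1+q²)/(1−q²)`), and
`B := P A⁻¹ = A⁻¹ − E A⁻¹ Eᵀ` is symmetric positive definite. -/
theorem symmetric_preconditioner_optimal {N : ℕ}
    (A E : Matrix (Fin N) (Fin N) ℝ) (hA : A.PosDef)
    (q : ℝ) (hq0 : 0 ≤ q) (hq1 : q < 1)
    (hE : ∀ x : Fin N → ℝ, anorm A (E.mulVec x) ≤ q * anorm A x) :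
    ((1 - E * (A⁻¹ * Eᵀ * A))ᵀ * A = A * (1 - E * (A⁻¹ * Eᵀ * A))) ∧
    (∀ x : Fin N → ℝ, (1 - q ^ 2) * (x ⬝ᵥ A.mulVec x) ≤
      ((1 - E * (A⁻¹ * Eᵀ * A)).mulVec x) ⬝ᵥ A.mulVec x) ∧
    (∀ x : Fin N → ℝ, anorm A ((1 - E * (A⁻¹ * Eᵀ * A)).mulVec x) ≤
      (1 + q ^ 2) * anorm A x) ∧
    (IsUnit (1 - E * (A⁻¹ * Eᵀ * A)) ∧
      ∀ x : Fin N → ℝ, anorm A ((1 - E * (A⁻¹ * Eᵀ * A))⁻¹.mulVec x) ≤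
        (1 - q ^ 2)⁻¹ * anorm A x) ∧
    ((1 - E * (A⁻¹ * Eᵀ * A)) * A⁻¹ = A⁻¹ - E * A⁻¹ * Eᵀ ∧
      ((1 - E * (A⁻¹ * Eᵀ * A)) * A⁻¹).PosDef) := by
  have hq : 0 < 1 - q ^ 2 := by nlinarith
  have hcoer := one_sub_mul_adjoint_coercive hA hq0 hE
  have hpos := hA.mulVec_dotProduct_mulVec_pos_of_coercive hq hcoer
  have hunit := isUnit_of_mulVec_dotProduct_mulVec_pos hpos
  have hsymm := transpose_one_sub_mul_adjoint_mul (isHermitian_iff_isSymm.mp hA.isHermitian) E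
  exact ⟨hsymm, hcoer, anorm_one_sub_mul_adjoint_mulVec_le hA hq0 hE,
    ⟨hunit, anorm_inv_mulVec_le_of_coercive hA.posSemidef hunit hq hcoer⟩,
    one_sub_mul_adjoint_mul_inv (isUnit_iff_ne_zero.mpr hA.det_pos.ne') E,
    hA.mul_inv_of_transpose_mul_eq hsymm hpos⟩
end

section
/- (Lions' lemma) Let V be a finite-dimensional real inner product space, let m ∈ ℕ, and let V_0, V_1, …, V_m be subspaces of V. Let P_j : V → V denote the orthogonal projection onto V_j, characterized by ⟨P_j v, w⟩ = ⟨v, w⟩ for all v ∈ V and all w ∈ V_j. Suppose there is a constant C > 0 such that every v ∈ V admits a decomposition v = ∑_{j=0}^{m} v_j with v_j ∈ V_j and ∑_{j=0}^{m} ‖v_j‖² ≤ C ‖v‖². Then, with the same constant C, one has ‖v‖² ≤ C · ∑_{j=0}^{m} ⟨P_j v, v⟩ for all v ∈ V. -/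
open scoped RealInnerProductSpace
open Finset

/-- Lions' lemma: if every `v` admits a decomposition `v = ∑ v_j` with
`v_j ∈ V_j` and `∑ ‖v_j‖² ≤ C ‖v‖²`, then with the same constant
`‖v‖² ≤ C ∑ ⟨P_j v, v⟩`, where `P_j` is the orthogonal projection onto `V_j`. -/
theorem lions_lemma {V : Type*} [NormedAddCommGroup V] [InnerProductSpace ℝ V]
    [FiniteDimensional ℝ V] (m : ℕ)
    (Vsub : Fin (m + 1) → Submodule ℝ V)
    (P : Fin (m + 1) → V →ₗ[ℝ] V)
    (hPrange : ∀ j, ∀ v : V, P j v ∈ Vsub j)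
    (hPproj : ∀ j, ∀ v : V, ∀ w ∈ Vsub j, ⟪P j v, w⟫ = ⟪v, w⟫)
    (C : ℝ) (hC : 0 < C)
    (hdec : ∀ v : V, ∃ f : Fin (m + 1) → V, (∀ j, f j ∈ Vsub j) ∧
      v = ∑ j, f j ∧ ∑ j, ‖f j‖ ^ 2 ≤ C * ‖v‖ ^ 2) :
    ∀ v : V, ‖v‖ ^ 2 ≤ C * ∑ j, ⟪P j v, v⟫ := by
  intro v
  -- ⟪P j v, v⟫ = ‖P j v‖²
  have hPv : ∀ j, ⟪P j v, v⟫ = ‖P j v‖ ^ 2 := by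
    intro j
    have h := hPproj j v (P j v) (hPrange j v)
    rw [real_inner_comm, ← h, real_inner_self_eq_norm_sq]
  have hSnn : (0:ℝ) ≤ ∑ j, ‖P j v‖ ^ 2 :=
    Finset.sum_nonneg fun j _ => sq_nonneg _
  rcases eq_or_ne v 0 with rfl | hv
  · simp only [norm_zero, map_zero, inner_zero_left, Finset.sum_const_zero, mul_zero]
    norm_num
  obtain ⟨f, hf, hsum, hbd⟩ := hdec v
  -- ‖v‖² = ∑ ⟪P j v, f j⟫
  have key : ‖v‖ ^ 2 = ∑ j, ⟪P j v, f j⟫ := by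
    have : ‖v‖ ^ 2 = ⟪v, v⟫ := (real_inner_self_eq_norm_sq v).symm
    rw [this]
    nth_rewrite 2 [hsum]
    rw [inner_sum]
    exact Finset.sum_congr rfl fun j _ => (hPproj j v (f j) (hf j)).symm
  have step1 : ‖v‖ ^ 2 ≤ ∑ j, ‖P j v‖ * ‖f j‖ := by
    rw [key]
    exact Finset.sum_le_sum fun j _ => real_inner_le_norm _ _
  have step2 : (∑ j, ‖P j v‖ * ‖f j‖) ^ 2 ≤ (∑ j, ‖P j v‖ ^ 2) * ∑ j, ‖f j‖ ^ 2 :=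
    Finset.sum_mul_sq_le_sq_mul_sq Finset.univ _ _
  have h4 : (‖v‖ ^ 2) ^ 2 ≤ (∑ j, ‖P j v‖ ^ 2) * (C * ‖v‖ ^ 2) := by
    calc (‖v‖ ^ 2) ^ 2 ≤ (∑ j, ‖P j v‖ * ‖f j‖) ^ 2 := by
          apply pow_le_pow_left₀ (by positivity) step1 2
      _ ≤ (∑ j, ‖P j v‖ ^ 2) * ∑ j, ‖f j‖ ^ 2 := step2
      _ ≤ (∑ j, ‖P j v‖ ^ 2) * (C * ‖v‖ ^ 2) :=
          mul_le_mul_of_nonneg_left hbd hSnn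
  have hv2 : (0:ℝ) < ‖v‖ ^ 2 := pow_pos (norm_pos_iff.mpr hv) 2
  have key2 : ‖v‖ ^ 2 ≤ C * ∑ j, ‖P j v‖ ^ 2 := by nlinarith [h4, hv2, hSnn]
  calc ‖v‖ ^ 2 ≤ C * ∑ j, ‖P j v‖ ^ 2 := key2
    _ = C * ∑ j, ⟪P j v, v⟫ := by
        congr 1; exact Finset.sum_congr rfl fun j _ => (hPv j).symm
end

section
/- Let V be a finite-dimensional real inner product space, let M ∈ ℕ, and let X_0 ⊆ X_1 ⊆ ⋯ ⊆ X_M be a nested family of subspaces of V with orthogonal projections Q_0, Q_1, …, Q_M (set Q_{−1} := 0 and D_k := Q_k − Q_{k−1} for 0 ≤ k ≤ M). Let G_0, …, G_M : V → V be linear maps such that, for each m: (a) G_m is self-adjoint (⟨G_m v, w⟩ = ⟨v, G_m w⟩ for all v, w), (b) G_m is positive semidefinite (⟨G_m v, v⟩ ≥ 0 for all v), and (c) the range of G_m is contained in X_m. Let δ ∈ (0,1) and C₀ > 0 be such that the strengthened Cauchy–Schwarz inequality ⟨G_m u, w⟩ ≤ C₀ δ^{m−k} ‖u‖ ‖w‖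 holds for all 0 ≤ k ≤ m ≤ M and all u, w ∈ X_k. Then ∑_{m=0}^{M} ⟨G_m v, v⟩ ≤ (C₀ / (1 − δ^{1/2})²) · ‖v‖² for all v ∈ V. -/
/-!
Write `d_k = Q_k v - Q_{k-1} v`, so that the `d_k ∈ X_k` are orthogonal, `Q_m v = ∑_{k ≤ m} d_k`
and `∑_k ‖d_k‖² ≤ ‖v‖²`. Since `G_m` maps into `X_m`, `⟪G_m v, v⟫ = ∑_{k ≤ m} ⟪G_m v, d_k⟫`, and
Cauchy–Schwarz for the form `⟪G_m ·, ·⟫` together with the strengthened Cauchy–Schwarz bound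
on the diagonal gives `⟪G_m v, v⟫ ≤ C₀ (∑_{k ≤ m} √δ^{m-k} ‖d_k‖)²`. Summing over `m` is
Young's inequality for a convolution with the geometric kernel `√δ^n`, of `ℓ¹`-norm
`(1 - √δ)⁻¹`.
-/

open scoped RealInnerProductSpace
open Finset

theorem sum_pow_le_inv_one_sub_of_injOn {ι : Type*} {s : Finset ι} {f : ι → ℕ}
    (hf : Set.InjOn f s) {r : ℝ} (h0 : 0 ≤ r) (h1 : r < 1) :
    ∑ i ∈ s, r ^ f i ≤ (1 - r)⁻¹ := by
  rw [← sum_image hf, ← tsum_geometric_of_lt_one h0 h1]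
  exact (summable_geometric_of_lt_one h0 h1).sum_le_tsum _ fun j _ => pow_nonneg h0 j

theorem sum_sq_sum_geom_mul_le (N : ℕ) {r : ℝ} (h0 : 0 ≤ r) (h1 : r < 1) (a : ℕ → ℝ) :
    ∑ m ∈ range N, (∑ k ∈ range (m + 1), r ^ (m - k) * a k) ^ 2
      ≤ (∑ k ∈ range N, a k ^ 2) / (1 - r) ^ 2 := by
  have row (m : ℕ) : (∑ k ∈ range (m + 1), r ^ (m - k) * a k) ^ 2
      ≤ (1 - r)⁻¹ * ∑ k ∈ range (m + 1), r ^ (m - k) * a k ^ 2 := by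
    calc _ ≤ (∑ k ∈ range (m + 1), r ^ (m - k)) * ∑ k ∈ range (m + 1), r ^ (m - k) * a k ^ 2 :=
          sum_sq_le_sum_mul_sum_of_sq_le_mul _ (fun _ _ => by positivity)
            (fun _ _ => by positivity) fun _ _ => le_of_eq (by ring)
      _ ≤ _ := by
          refine mul_le_mul_of_nonneg_right (sum_pow_le_inv_one_sub_of_injOn ?_ h0 h1)
            (sum_nonneg fun _ _ => by positivity)
          intro k hk l hl h
          simp only [coe_range, Set.mem_Iio] at hk hl h
          omega
  have col (k : ℕ) : ∑ m ∈ Ico k N, r ^ (m - k) ≤ (1 - r)⁻¹ := by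
    refine sum_pow_le_inv_one_sub_of_injOn ?_ h0 h1
    intro m hm n hn h
    simp only [coe_Ico, Set.mem_Ico] at hm hn h
    omega
  calc _ ≤ ∑ m ∈ range N, (1 - r)⁻¹ * ∑ k ∈ range (m + 1), r ^ (m - k) * a k ^ 2 :=
        sum_le_sum fun m _ => row m
    _ = (1 - r)⁻¹ * ∑ k ∈ range N, a k ^ 2 * ∑ m ∈ Ico k N, r ^ (m - k) := by
        simp only [← mul_sum, range_eq_Ico]
        rw [← sum_Ico_Ico_comm 0 N fun k m => r ^ (m - k) * a k ^ 2]
        simp only [mul_sum, mul_comm]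
    _ ≤ (1 - r)⁻¹ * ∑ k ∈ range N, a k ^ 2 * (1 - r)⁻¹ := by
        gcongr with k
        exact col k
    _ = _ := by rw [← sum_mul]; field_simp

section PositiveOperator

variable {V : Type*} [NormedAddCommGroup V] [InnerProductSpace ℝ V] {g : V →ₗ[ℝ] V}

theorem LinearMap.IsPositive.inner_apply_sq_le (hg : g.IsPositive) (x y : V) :
    ⟪g x, y⟫ ^ 2 ≤ ⟪g x, x⟫ * ⟪g y, y⟫ := by
  have h := LinearMap.BilinForm.apply_mul_apply_le_of_forall_zero_le ((innerₗ V).comp g)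
    hg.inner_nonneg_left x y
  simp only [LinearMap.comp_apply, innerₗ_apply_apply] at h
  rwa [hg.isSymmetric y x, real_inner_comm (g x) y, ← sq] at h

theorem LinearMap.IsPositive.inner_apply_self_le_sq_sum (hg : g.IsPositive) {ι : Type*}
    (s : Finset ι) (d : ι → V) (c : ι → ℝ) {v : V} (hv : ⟪g v, v⟫ = ⟪g v, ∑ i ∈ s, d i⟫)
    (hd : ∀ i ∈ s, ⟪g (d i), d i⟫ ≤ c i ^ 2) (hc : ∀ i ∈ s, 0 ≤ c i) :
    ⟪g v, v⟫ ≤ (∑ i ∈ s, c i) ^ 2 := by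
  have hx : 0 ≤ ⟪g v, v⟫ := hg.inner_nonneg_left v
  have key : ⟪g v, v⟫ ^ 2 ≤ ⟪g v, v⟫ * (∑ i ∈ s, c i) ^ 2 := by
    calc ⟪g v, v⟫ ^ 2 = (∑ i ∈ s, ⟪g v, d i⟫) ^ 2 := by rw [hv, inner_sum]
      _ ≤ (∑ i ∈ s, ⟪g v, v⟫ * c i) * ∑ i ∈ s, c i := by
          refine sum_sq_le_sum_mul_sum_of_sq_le_mul s (fun i hi => mul_nonneg hx (hc i hi)) hc
            fun i hi => ?_
          calc ⟪g v, d i⟫ ^ 2 ≤ ⟪g v, v⟫ * ⟪g (d i), d i⟫ := hg.inner_apply_sq_le v (d i)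
            _ ≤ ⟪g v, v⟫ * (c i * c i) := by rw [← sq]; gcongr; exact hd i hi
            _ = _ := by ring
      _ = _ := by rw [← mul_sum]; ring
  nlinarith

end PositiveOperator

section ProjectionIncrements

variable {V : Type*} [NormedAddCommGroup V] [InnerProductSpace ℝ V]

theorem inner_starProjection_sub_starProjection_eq_zero {K L : Submodule ℝ V}
    [K.HasOrthogonalProjection] [L.HasOrthogonalProjection] (hKL : K ≤ L) (v : V) {w : V}
    (hw : w ∈ K) : ⟪L.starProjection v - K.starProjection v, w⟫ = 0 := by
  rw [← sub_sub_sub_cancel_left _ _ v, inner_sub_left, K.starProjection_inner_eq_zero v w hw,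
    L.starProjection_inner_eq_zero v w (hKL hw), sub_zero]

variable (X : ℕ → Submodule ℝ V) [∀ n, (X n).HasOrthogonalProjection] (v : V)

noncomputable def starProjectionIncrement : ℕ → V
  | 0 => (X 0).starProjection v
  | k + 1 => (X (k + 1)).starProjection v - (X k).starProjection v

theorem starProjectionIncrement_mem (hX : Monotone X) (k : ℕ) :
    starProjectionIncrement X v k ∈ X k := by
  cases k with
  | zero => exact (X 0).starProjection_apply_mem v
  | succ k =>
    exact sub_mem ((X (k + 1)).starProjection_apply_mem v)
      (hX k.le_succ ((X k).starProjection_apply_mem v))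

theorem sum_range_starProjectionIncrement (n : ℕ) :
    ∑ k ∈ range (n + 1), starProjectionIncrement X v k = (X n).starProjection v := by
  induction n with
  | zero => simp [starProjectionIncrement]
  | succ n ih => rw [sum_range_succ, ih, starProjectionIncrement, add_sub_cancel]

theorem sum_range_norm_starProjectionIncrement_sq (hX : Monotone X) (n : ℕ) :
    ∑ k ∈ range (n + 1), ‖starProjectionIncrement X v k‖ ^ 2 = ‖(X n).starProjection v‖ ^ 2 := by
  induction n with
  | zero => simp [starProjectionIncrement]
  | succ n ih =>
    have horth : ⟪(X n).starProjection v, starProjectionIncrement X v (n + 1)⟫ = 0 := by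
      rw [real_inner_comm]
      exact inner_starProjection_sub_starProjection_eq_zero (hX n.le_succ) v
        ((X n).starProjection_apply_mem v)
    have hsplit : (X (n + 1)).starProjection v
        = (X n).starProjection v + starProjectionIncrement X v (n + 1) :=
      (add_sub_cancel _ _).symm
    rw [sum_range_succ, ih, hsplit, norm_add_sq_real, horth]
    ring

theorem sum_range_norm_starProjectionIncrement_sq_le (hX : Monotone X) (n : ℕ) :
    ∑ k ∈ range n, ‖starProjectionIncrement X v k‖ ^ 2 ≤ ‖v‖ ^ 2 := by
  cases n with
  | zero => simp
  | succ n =>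
    rw [sum_range_norm_starProjectionIncrement_sq X v hX]
    gcongr
    exact (X n).norm_starProjection_apply_le v

end ProjectionIncrements

theorem sum_inner_apply_self_le_of_strengthened_cauchy_schwarz {V : Type*}
    [NormedAddCommGroup V] [InnerProductSpace ℝ V] (X : ℕ → Submodule ℝ V)
    [∀ n, (X n).HasOrthogonalProjection] (hX : Monotone X) (G : ℕ → V →ₗ[ℝ] V)
    (hG : ∀ m, (G m).IsPositive) (hGrange : ∀ m v, G m v ∈ X m) {δ C₀ : ℝ} (hδ0 : 0 ≤ δ)
    (hδ1 : δ < 1) (hC₀ : 0 ≤ C₀) (N : ℕ)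
    (hSCS : ∀ k m, k ≤ m → m < N → ∀ u ∈ X k, ⟪G m u, u⟫ ≤ C₀ * δ ^ (m - k) * ‖u‖ ^ 2)
    (v : V) : ∑ m ∈ range N, ⟪G m v, v⟫ ≤ C₀ / (1 - √δ) ^ 2 * ‖v‖ ^ 2 := by
  set d := starProjectionIncrement X v
  have hlevel : ∀ m < N, ⟪G m v, v⟫ ≤ C₀ * (∑ k ∈ range (m + 1), √δ ^ (m - k) * ‖d k‖) ^ 2 := by
    intro m hm
    have hv : ⟪G m v, v⟫ = ⟪G m v, ∑ k ∈ range (m + 1), d k⟫ := by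
      rw [sum_range_starProjectionIncrement, ← (X m).inner_starProjection_left_eq_right,
        (X m).starProjection_eq_self_iff.2 (hGrange m v)]
    have hd (k : ℕ) (hk : k ∈ range (m + 1)) :
        ⟪G m (d k), d k⟫ ≤ (√C₀ * (√δ ^ (m - k) * ‖d k‖)) ^ 2 := by
      calc ⟪G m (d k), d k⟫ ≤ C₀ * δ ^ (m - k) * ‖d k‖ ^ 2 :=
            hSCS k m (Nat.lt_succ_iff.1 (mem_range.1 hk)) hm _
              (starProjectionIncrement_mem X v hX k)
        _ = _ := by rw [mul_pow, mul_pow, ← pow_mul, mul_comm (m - k), pow_mul,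
              Real.sq_sqrt hC₀, Real.sq_sqrt hδ0, mul_assoc]
    have h := (hG m).inner_apply_self_le_sq_sum _ d _ hv hd fun _ _ => by positivity
    rwa [← mul_sum, mul_pow, Real.sq_sqrt hC₀] at h
  calc ∑ m ∈ range N, ⟪G m v, v⟫
      ≤ ∑ m ∈ range N, C₀ * (∑ k ∈ range (m + 1), √δ ^ (m - k) * ‖d k‖) ^ 2 :=
        sum_le_sum fun m hm => hlevel m (mem_range.1 hm)
    _ = C₀ * ∑ m ∈ range N, (∑ k ∈ range (m + 1), √δ ^ (m - k) * ‖d k‖) ^ 2 :=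
        (mul_sum ..).symm
    _ ≤ C₀ * ((∑ k ∈ range N, ‖d k‖ ^ 2) / (1 - √δ) ^ 2) := by
        gcongr
        exact sum_sq_sum_geom_mul_le N (Real.sqrt_nonneg δ) ((Real.sqrt_lt_sqrt hδ0 hδ1).trans_eq Real.sqrt_one) _
    _ ≤ C₀ * (‖v‖ ^ 2 / (1 - √δ) ^ 2) := by
        gcongr
        exact sum_range_norm_starProjectionIncrement_sq_le X v hX N
    _ = _ := by ring

/-- Strengthened Cauchy–Schwarz implies uniform boundedness of levelwise sums:
for nested subspaces `X_0 ⊆ ⋯ ⊆ X_M`, self-adjoint positive semidefinite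
operators `G_m` with range in `X_m` satisfying the strengthened Cauchy–Schwarz
inequality `⟨G_m u, w⟩ ≤ C₀ δ^{m−k} ‖u‖ ‖w‖` for `u, w ∈ X_k`, `k ≤ m`, one has
`∑_m ⟨G_m v, v⟩ ≤ (C₀ / (1 − √δ)²) ‖v‖²`. -/
theorem strengthened_cs_sum_bound {V : Type*} [NormedAddCommGroup V]
    [InnerProductSpace ℝ V] [FiniteDimensional ℝ V] (M : ℕ)
    (X : Fin (M + 1) → Submodule ℝ V)
    (hX : ∀ k m : Fin (M + 1), k ≤ m → X k ≤ X m)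
    (G : Fin (M + 1) → V →ₗ[ℝ] V)
    (hGsym : ∀ m, ∀ v w : V, ⟪G m v, w⟫ = ⟪v, G m w⟫)
    (hGpos : ∀ m, ∀ v : V, 0 ≤ ⟪G m v, v⟫)
    (hGrange : ∀ m, ∀ v : V, G m v ∈ X m)
    (δ C₀ : ℝ) (hδ0 : 0 < δ) (hδ1 : δ < 1) (hC₀ : 0 < C₀)
    (hSCS : ∀ k m : Fin (M + 1), k ≤ m → ∀ u w : V, u ∈ X k → w ∈ X k →
      ⟪G m u, w⟫ ≤ C₀ * δ ^ ((m : ℕ) - (k : ℕ)) * ‖u‖ * ‖w‖) :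
    ∀ v : V, ∑ m, ⟪G m v, v⟫ ≤ (C₀ / (1 - Real.sqrt δ) ^ 2) * ‖v‖ ^ 2 := by
  intro v
  have hclamp (m : ℕ) (hm : m < M + 1) : (Fin.clamp m M : ℕ) = m := by
    rw [Fin.coe_clamp]; omega
  have hsum : ∑ m, ⟪G m v, v⟫ = ∑ m ∈ range (M + 1), ⟪G (Fin.clamp m M) v, v⟫ := by
    rw [← Fin.sum_univ_eq_sum_range]
    exact sum_congr rfl fun m _ => by rw [Fin.ext (hclamp m m.isLt)]
  rw [hsum]
  refine sum_inner_apply_self_le_of_strengthened_cauchy_schwarz _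
    (fun a b hab => hX _ _ (Fin.clamp_monotone hab)) _ (fun m => ⟨hGsym _, hGpos _⟩)
    (fun m => hGrange _) hδ0.le hδ1 hC₀.le (M + 1) (fun k m hkm hm u hu => ?_) v
  have h := hSCS _ _ (Fin.clamp_monotone hkm) u u hu hu
  rwa [hclamp m hm, hclamp k (by omega), mul_assoc _ ‖u‖, ← sq] at h
end
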